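/- Let p be a probability distribution on a finite set with all p_i > 0 and not uniform. For temperature 𝒯 > 0, define the tempered distribution p_i^{(𝒯)} = p_i^{1/𝒯} / ∑_j p_j^{1/𝒯}. Then the Shannon entropy H(p^{(𝒯)}) is strictly increasing in 𝒯; moreover H(p^{(𝒯)}) → log V as 𝒯 → ∞ (where V is the support size). -/

import Mathlib

/-!
With `β = 1 / 𝒯` and `ℓ i = log (p i)` we have `p i ^ β = exp (ℓ i * β)`, so the tempered
distribution is the Gibbs distribution of `ℓ` at inverse temperature `β`, with partition function
`Z β = ∑ i, exp (ℓ i * β)` and entropy `H β = log Z - β Z' / Z`. Differentiating gives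
`H' β = -β (Z Z'' - Z'²) / Z²`, and `Z Z'' - Z'²` is `Z²` times the variance of `ℓ` under the
Gibbs distribution, which is positive because `p` is not uniform. So `H` is strictly decreasing
in `β > 0`, i.e. strictly increasing in `𝒯`, and as `𝒯 → ∞` it tends to `H 0 = log V`
by continuity.
-/

open Filter Finset Real

theorem sq_sum_mul_lt_sum_mul_sum_mul_sq {ι : Type*} [Fintype ι] {w f : ι → ℝ}
    (hw : ∀ i, 0 < w i) (hf : ∃ i j, f i ≠ f j) :
    (∑ i, w i * f i) ^ 2 < (∑ i, w i) * ∑ i, w i * f i ^ 2 := by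
  set W := ∑ i, w i
  set M := ∑ i, w i * f i
  obtain ⟨i, j, hij⟩ := hf
  have hW : 0 < W := sum_pos (fun k _ => hw k) ⟨i, mem_univ i⟩
  obtain ⟨k, hk⟩ : ∃ k, W * f k - M ≠ 0 := by
    by_contra! h
    exact hij (mul_left_cancel₀ hW.ne' (by linarith [h i, h j]))
  have hspread : 0 < ∑ i, w i * (W * f i - M) ^ 2 :=
    sum_pos' (fun i _ => by have := hw i; positivity)
      ⟨k, mem_univ k, mul_pos (hw k) (pow_two_pos_of_ne_zero hk)⟩
  have hexpand : ∑ i, w i * (W * f i - M) ^ 2 = W * (W * ∑ i, w i * f i ^ 2 - M ^ 2) := by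
    have hterm : ∀ i, w i * (W * f i - M) ^ 2
        = W ^ 2 * (w i * f i ^ 2) - 2 * W * M * (w i * f i) + M ^ 2 * w i := fun i => by ring
    simp only [hterm, sum_add_distrib, sum_sub_distrib, ← mul_sum]
    ring
  rw [hexpand] at hspread
  exact sub_pos.mp ((mul_pos_iff_of_pos_left hW).mp hspread)

namespace Gibbs

noncomputable section

variable {ι : Type*} [Fintype ι] (ℓ : ι → ℝ)

/-- The `k`-th derivative of the partition function `β ↦ ∑ i, exp (ℓ i * β)`. -/
def expMoment (k : ℕ) (β : ℝ) : ℝ := ∑ i, exp (ℓ i * β) * ℓ i ^ k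

/-- The Shannon entropy of the distribution proportional to `exp (ℓ i * β)`. -/
def entropy (β : ℝ) : ℝ := log (expMoment ℓ 0 β) - β * expMoment ℓ 1 β / expMoment ℓ 0 β

theorem expMoment_zero (β : ℝ) : expMoment ℓ 0 β = ∑ i, exp (ℓ i * β) := by
  simp [expMoment]

theorem expMoment_zero_pos [Nonempty ι] (β : ℝ) : 0 < expMoment ℓ 0 β := by
  rw [expMoment_zero]
  exact sum_pos (fun i _ => exp_pos _) univ_nonempty

theorem hasDerivAt_expMoment (k : ℕ) (β : ℝ) :
    HasDerivAt (expMoment ℓ k) (expMoment ℓ (k + 1) β) β :=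
  HasDerivAt.fun_sum fun i _ =>
    (((hasDerivAt_id' β).const_mul (ℓ i)).exp.mul_const (ℓ i ^ k)).congr_deriv (by ring)

theorem expMoment_sq_lt (hℓ : ∃ i j, ℓ i ≠ ℓ j) (β : ℝ) :
    expMoment ℓ 1 β ^ 2 < expMoment ℓ 0 β * expMoment ℓ 2 β := by
  simpa only [expMoment, pow_one, pow_zero, mul_one] using
    sq_sum_mul_lt_sum_mul_sum_mul_sq (fun i => exp_pos (ℓ i * β)) hℓ

theorem hasDerivAt_entropy [Nonempty ι] (β : ℝ) :
    HasDerivAt (entropy ℓ) (-β * (expMoment ℓ 0 β * expMoment ℓ 2 β - expMoment ℓ 1 β ^ 2) /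
      expMoment ℓ 0 β ^ 2) β := by
  have hZ := (expMoment_zero_pos ℓ β).ne'
  have hlogZ := (hasDerivAt_expMoment ℓ 0 β).log hZ
  have hmean := ((hasDerivAt_id' β).fun_mul (hasDerivAt_expMoment ℓ 1 β)).fun_div
    (hasDerivAt_expMoment ℓ 0 β) hZ
  refine (hlogZ.fun_sub hmean).congr_deriv ?_
  field_simp
  ring

theorem entropy_strictAntiOn (hℓ : ∃ i j, ℓ i ≠ ℓ j) :
    StrictAntiOn (entropy ℓ) (Set.Ioi 0) := by
  have : Nonempty ι := ⟨hℓ.choose⟩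
  refine strictAntiOn_of_deriv_neg (convex_Ioi 0)
    (fun β _ => (hasDerivAt_entropy ℓ β).continuousAt.continuousWithinAt) fun β hβ => ?_
  rw [interior_Ioi] at hβ
  rw [(hasDerivAt_entropy ℓ β).deriv]
  have hvar := sub_pos.mpr (expMoment_sq_lt ℓ hℓ β)
  have hZ := expMoment_zero_pos ℓ β
  exact div_neg_of_neg_of_pos (mul_neg_of_neg_of_pos (neg_neg_of_pos hβ) hvar) (by positivity)

theorem entropy_zero : entropy ℓ 0 = log (Fintype.card ι) := by
  simp [entropy, expMoment_zero]

theorem neg_sum_mul_log_eq_entropy [Nonempty ι] (β : ℝ) :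
    -∑ i, (exp (ℓ i * β) / ∑ j, exp (ℓ j * β)) * log (exp (ℓ i * β) / ∑ j, exp (ℓ j * β)) =
      entropy ℓ β := by
  have hZ := expMoment_zero_pos ℓ β
  rw [expMoment_zero] at hZ
  simp only [entropy, expMoment, pow_zero, pow_one, mul_one, log_div (exp_ne_zero _) hZ.ne',
    log_exp, ← sum_div, mul_sub, sum_sub_distrib, div_mul_eq_mul_div, ← mul_assoc, ← sum_mul]
  rw [mul_div_cancel_left₀ _ hZ.ne']
  ring

end

end Gibbs

open Gibbs in
theorem tempered_entropy_strictMono_and_limit_general (V : ℕ)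
    (p : Fin V → ℝ) (hp : ∀ i, 0 < p i)
    (hnonunif : ∃ i j, p i ≠ p j) :
    StrictMonoOn
      (fun 𝒯 : ℝ =>
        -∑ i, (p i ^ (1 / 𝒯) / ∑ j, p j ^ (1 / 𝒯)) *
          Real.log (p i ^ (1 / 𝒯) / ∑ j, p j ^ (1 / 𝒯)))
      (Set.Ioi (0 : ℝ)) ∧
    Tendsto
      (fun 𝒯 : ℝ =>
        -∑ i, (p i ^ (1 / 𝒯) / ∑ j, p j ^ (1 / 𝒯)) *
          Real.log (p i ^ (1 / 𝒯) / ∑ j, p j ^ (1 / 𝒯)))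
      atTop (nhds (Real.log V)) := by
  have : Nonempty (Fin V) := ⟨hnonunif.choose⟩
  set ℓ := fun i => log (p i)
  have hℓ : ∃ i j, ℓ i ≠ ℓ j := by
    obtain ⟨i, j, hij⟩ := hnonunif
    exact ⟨i, j, fun h => hij (log_injOn_pos (hp i) (hp j) h)⟩
  have hH : (fun 𝒯 : ℝ => -∑ i, (p i ^ (1 / 𝒯) / ∑ j, p j ^ (1 / 𝒯)) *
      log (p i ^ (1 / 𝒯) / ∑ j, p j ^ (1 / 𝒯))) = entropy ℓ ∘ fun 𝒯 => 𝒯⁻¹ := by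
    ext 𝒯
    simp only [rpow_def_of_pos (hp _), one_div, Function.comp]
    exact neg_sum_mul_log_eq_entropy ℓ 𝒯⁻¹
  rw [hH]
  refine ⟨(entropy_strictAntiOn ℓ hℓ).comp inv_strictAntiOn
    fun 𝒯 h𝒯 => inv_pos.mpr (Set.mem_Ioi.mp h𝒯), ?_⟩
  have hlim := (hasDerivAt_entropy ℓ 0).continuousAt.tendsto.comp tendsto_inv_atTop_zero
  rwa [entropy_zero, Fintype.card_fin] at hlim

/-- For a strictly positive, non-uniform distribution `p` on a finite set of
size `V`, the Shannon entropy of the tempered distribution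
`p_i^{(𝒯)} = p_i^{1/𝒯} / ∑_j p_j^{1/𝒯}` is strictly increasing in the
temperature `𝒯 > 0`, and tends to `log V` as `𝒯 → ∞`. -/
theorem tempered_entropy_strictMono_and_limit (V : ℕ) (hV : 0 < V)
    (p : Fin V → ℝ) (hp : ∀ i, 0 < p i) (hsum : ∑ i, p i = 1)
    (hnonunif : ∃ i j, p i ≠ p j) :
    StrictMonoOn
      (fun 𝒯 : ℝ =>
        -∑ i, (p i ^ (1 / 𝒯) / ∑ j, p j ^ (1 / 𝒯)) *
          Real.log (p i ^ (1 / 𝒯) / ∑ j, p j ^ (1 / 𝒯)))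
      (Set.Ioi (0 : ℝ)) ∧
    Tendsto
      (fun 𝒯 : ℝ =>
        -∑ i, (p i ^ (1 / 𝒯) / ∑ j, p j ^ (1 / 𝒯)) *
          Real.log (p i ^ (1 / 𝒯) / ∑ j, p j ^ (1 / 𝒯)))
      atTop (nhds (Real.log V)) :=
  tempered_entropy_strictMono_and_limit_general V p hp hnonunif
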